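/- Let p ≥ 1, let h : ℝ^p → ℝ be convex and differentiable with ∇h Lipschitz continuous with constant L > 0 (Euclidean norm), let g : ℝ^p → ℝ be convex, and set F = h + g. Let D be a p×p diagonal matrix whose diagonal entries all lie in [c₁, c₂] with 0 < c₁ ≤ c₂, and let γ ∈ (0, c₁/L]. Let β, β', ξ ∈ ℝ^p and let q be a minimizer over ℝ^p of x ↦ g(x) + (1/(2γ)) ‖x − β‖_D². Then −2γ (F(q) − F(β')) ≥ ‖q − β'‖_D² + 2 ⟨q − β', ξ − γ D⁻¹ ∇h(ξ) − β⟩_D − ‖β' − ξ‖_D². -/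

import Mathlib

/-!
Since `q` minimizes `g + ‖· - β‖_D² / (2γ)`, comparing it with the points of the segment
`[q, β']` and letting them tend to `q` gives, by convexity of `g`, the variational inequality
`γ (g q - g β') ≤ ⟨q - β, β' - q⟩_D`. For `h`, the descent lemma at `ξ` and the gradient
inequality of the convex `h` at `ξ` give `h q - h β' ≤ ⟪∇h ξ, q - β'⟫ + L/2 ‖q - ξ‖²`, and
`γ L ≤ c₁ ≤ D` bounds `γ L ‖q - ξ‖²` by `‖q - ξ‖_D²`. Adding the two estimates, the claim is a
three-point identity for `⟨·, ·⟩_D`.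
-/

open scoped BigOperators
open MeasureTheory Filter

noncomputable def dInner {p : ℕ} (d : Fin p → ℝ) (x y : EuclideanSpace ℝ (Fin p)) : ℝ :=
  ∑ i, d i * x i * y i

noncomputable def dNorm {p : ℕ} (d : Fin p → ℝ) (x : EuclideanSpace ℝ (Fin p)) : ℝ :=
  Real.sqrt (dInner d x x)

noncomputable def dInvMul {p : ℕ} (d : Fin p → ℝ) (v : EuclideanSpace ℝ (Fin p)) :
    EuclideanSpace ℝ (Fin p) :=
  WithLp.toLp 2 (fun i => (d i)⁻¹ * v i)

open Set Topology
open scoped RealInnerProductSpace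

section Gradient

variable {E : Type*} [NormedAddCommGroup E] [InnerProductSpace ℝ E] [CompleteSpace E]
  {f : E → ℝ} {f' : E → E} {u x v : E} {t : ℝ}

theorem HasGradientAt.hasDerivAt_comp_add_smul (hf : HasGradientAt f u (x + t • v)) :
    HasDerivAt (fun s : ℝ ↦ f (x + s • v)) ⟪u, v⟫ t := by
  have hline : HasDerivAt (fun s : ℝ ↦ x + s • v) v t := by
    simpa using ((hasDerivAt_id t).smul_const v).const_add x
  simpa [InnerProductSpace.toDual_apply_apply, Function.comp_def] using
    hf.hasFDerivAt.comp_hasDerivAt t hline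

theorem ConvexOn.add_inner_gradient_le (hf : ConvexOn ℝ univ f) (hu : HasGradientAt f u x)
    (y : E) : f x + ⟪u, y - x⟫ ≤ f y := by
  have hline : ConvexOn ℝ univ (fun t : ℝ ↦ f (x + t • (y - x))) := by
    simpa [Function.comp_def, AffineMap.lineMap_apply_module', add_comm] using
      hf.comp_affineMap (AffineMap.lineMap x y)
  have hderiv : HasDerivAt (fun t : ℝ ↦ f (x + t • (y - x))) ⟪u, y - x⟫ 0 :=
    HasGradientAt.hasDerivAt_comp_add_smul (by simpa using hu)
  have := hline.le_slope_of_hasDerivWithinAt_Ioi (mem_univ 0) (mem_univ 1) one_pos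
    hderiv.hasDerivWithinAt
  simp only [slope_def_field, one_smul, add_sub_cancel, zero_smul, add_zero, sub_zero,
    div_one] at this
  linarith

theorem le_add_inner_gradient_add_sq (hf : ∀ x, HasGradientAt f (f' x) x) {L : ℝ}
    (hlip : ∀ x y, ‖f' x - f' y‖ ≤ L * ‖x - y‖) (x y : E) :
    f y ≤ f x + ⟪f' x, y - x⟫ + L / 2 * ‖y - x‖ ^ 2 := by
  set v := y - x
  set φ : ℝ → ℝ := fun t ↦ f (x + t • v) - t * ⟪f' x, v⟫ - L / 2 * ‖v‖ ^ 2 * t ^ 2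
  have hφ (t : ℝ) : HasDerivAt φ (⟪f' (x + t • v) - f' x, v⟫ - L * ‖v‖ ^ 2 * t) t := by
    refine ((((hf _).hasDerivAt_comp_add_smul).sub ((hasDerivAt_id t).mul_const _)).sub
      ((hasDerivAt_pow 2 t).const_mul (L / 2 * ‖v‖ ^ 2))).congr_deriv ?_
    rw [inner_sub_left]; ring
  have hanti : AntitoneOn φ (Icc 0 1) := by
    refine antitoneOn_of_hasDerivWithinAt_nonpos (convex_Icc 0 1)
      (fun t _ ↦ (hφ t).continuousAt.continuousWithinAt) (fun t _ ↦ (hφ t).hasDerivWithinAt) ?_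
    intro t ht
    rw [interior_Icc] at ht
    have hstep : ‖f' (x + t • v) - f' x‖ ≤ L * (t * ‖v‖) := by
      simpa [norm_smul, abs_of_pos ht.1] using hlip (x + t • v) x
    nlinarith [real_inner_le_norm (f' (x + t • v) - f' x) v, norm_nonneg v,
      mul_le_mul_of_nonneg_right hstep (norm_nonneg v)]
  have := hanti (left_mem_Icc.2 zero_le_one) (right_mem_Icc.2 zero_le_one) zero_le_one
  simp only [φ, v, zero_smul, add_zero, one_smul, add_sub_cancel] at this
  linarith

end Gradient

theorem ConvexOn.sub_le_of_isMinOn_add {E : Type*} [AddCommGroup E] [Module ℝ E] {g φ : E → ℝ}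
    (hg : ConvexOn ℝ univ g) {q y : E} (hmin : IsMinOn (g + φ) univ q) {a b : ℝ}
    (hφ : ∀ t ∈ Ioc (0 : ℝ) 1, φ (q + t • (y - q)) ≤ φ q + t * a + t ^ 2 * b) :
    g q - g y ≤ a := by
  have hsegment : ∀ t ∈ Ioc (0 : ℝ) 1, g q - g y ≤ a + t * b := by
    rintro t ⟨ht₀, ht₁⟩
    have hconv : g (q + t • (y - q)) ≤ (1 - t) * g q + t * g y := by
      have := hg.2 (mem_univ q) (mem_univ y) (sub_nonneg.2 ht₁) ht₀.le (sub_add_cancel 1 t)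
      rwa [show (1 - t) • q + t • y = q + t • (y - q) by module, smul_eq_mul, smul_eq_mul] at this
    have hmin_t : g q + φ q ≤ g (q + t • (y - q)) + φ (q + t • (y - q)) :=
      isMinOn_univ_iff.1 hmin _
    refine le_of_mul_le_mul_left ?_ ht₀
    nlinarith [hφ t ⟨ht₀, ht₁⟩]
  have hlim : Tendsto (fun t : ℝ ↦ a + t * b) (𝓝[>] 0) (𝓝 a) := by
    refine tendsto_nhdsWithin_of_tendsto_nhds ?_
    simpa using ((continuous_id.mul continuous_const).const_add a).tendsto (0 : ℝ)
  exact ge_of_tendsto hlim (eventually_of_mem (Ioc_mem_nhdsGT one_pos) hsegment)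

section DInner

variable {p : ℕ} (d : Fin p → ℝ)

theorem dInner_self_nonneg (hd : ∀ i, 0 ≤ d i) (z : EuclideanSpace ℝ (Fin p)) :
    0 ≤ dInner d z z :=
  Finset.sum_nonneg fun i _ ↦ by rw [mul_assoc]; exact mul_nonneg (hd i) (mul_self_nonneg _)

theorem dNorm_sq (hd : ∀ i, 0 ≤ d i) (z : EuclideanSpace ℝ (Fin p)) :
    dNorm d z ^ 2 = dInner d z z :=
  Real.sq_sqrt (dInner_self_nonneg d hd z)

theorem dInner_add_smul_self (t : ℝ) (x y : EuclideanSpace ℝ (Fin p)) :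
    dInner d (x + t • y) (x + t • y)
      = dInner d x x + 2 * t * dInner d x y + t ^ 2 * dInner d y y := by
  simp only [dInner, PiLp.add_apply, PiLp.smul_apply, smul_eq_mul, Finset.mul_sum,
    ← Finset.sum_add_distrib]
  exact Finset.sum_congr rfl fun i _ ↦ by ring

theorem mul_norm_sq_le_dInner_self {c : ℝ} (hd : ∀ i, c ≤ d i) (z : EuclideanSpace ℝ (Fin p)) :
    c * ‖z‖ ^ 2 ≤ dInner d z z := by
  rw [EuclideanSpace.real_norm_sq_eq, Finset.mul_sum, dInner]
  exact Finset.sum_le_sum fun i _ ↦ by nlinarith [sq_nonneg (z i), hd i]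

-- `q = Prox_{γ,g}^D(β)`
def IsScaledProx (γ : ℝ) (g : EuclideanSpace ℝ (Fin p) → ℝ) (β q : EuclideanSpace ℝ (Fin p)) :
    Prop :=
  ∀ x, g q + (1 / (2 * γ)) * dNorm d (q - β) ^ 2 ≤ g x + (1 / (2 * γ)) * dNorm d (x - β) ^ 2

theorem IsScaledProx.mul_sub_le_dInner {γ : ℝ} {g : EuclideanSpace ℝ (Fin p) → ℝ}
    {β q : EuclideanSpace ℝ (Fin p)} (hq : IsScaledProx d γ g β q) (hg : ConvexOn ℝ univ g)
    (hd : ∀ i, 0 ≤ d i) (hγ : 0 < γ) (y : EuclideanSpace ℝ (Fin p)) :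
    γ * (g q - g y) ≤ dInner d (q - β) (y - q) := by
  have := hg.sub_le_of_isMinOn_add (φ := fun x ↦ (1 / (2 * γ)) * dNorm d (x - β) ^ 2)
    (isMinOn_univ_iff.2 hq) (a := dInner d (q - β) (y - q) / γ)
    (b := dInner d (y - q) (y - q) / (2 * γ)) fun t _ ↦ le_of_eq <| by
      rw [dNorm_sq d hd, dNorm_sq d hd, show q + t • (y - q) - β = q - β + t • (y - q) by abel,
        dInner_add_smul_self]
      field_simp
  rwa [le_div_iff₀ hγ, mul_comm] at this

-- The three-point identity for `⟨·, ·⟩_D`, combined with `⟨x, D⁻¹ w⟩_D = ⟪w, x⟫`.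
theorem dInner_three_point (hd : ∀ i, d i ≠ 0) (γ : ℝ) (β β' ξ q w : EuclideanSpace ℝ (Fin p)) :
    dInner d (q - β') (q - β') + 2 * dInner d (q - β') (ξ - γ • dInvMul d w - β)
        - dInner d (β' - ξ) (β' - ξ)
      = -2 * dInner d (q - β) (β' - q) - 2 * γ * ⟪w, q - β'⟫ - dInner d (q - ξ) (q - ξ) := by
  simp only [dInner, dInvMul, PiLp.inner_apply, RCLike.inner_apply, conj_trivial,
    PiLp.sub_apply, PiLp.smul_apply, smul_eq_mul, Finset.mul_sum,
    ← Finset.sum_sub_distrib, ← Finset.sum_add_distrib]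
  refine Finset.sum_congr rfl fun i _ ↦ ?_
  field_simp [hd i]
  ring

end DInner

theorem stmt_4_general {p : ℕ}
    (h g : EuclideanSpace ℝ (Fin p) → ℝ)
    (h' : EuclideanSpace ℝ (Fin p) → EuclideanSpace ℝ (Fin p))
    (hh : ConvexOn ℝ Set.univ h)
    (hdiff : ∀ x, HasGradientAt h (h' x) x)
    (L : ℝ) (hL : 0 < L)
    (hlip : ∀ x y : EuclideanSpace ℝ (Fin p), ‖h' x - h' y‖ ≤ L * ‖x - y‖)
    (hg : ConvexOn ℝ Set.univ g)
    (c₁ c₂ : ℝ) (hc₁ : 0 < c₁)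
    (d : Fin p → ℝ) (hd : ∀ i, d i ∈ Set.Icc c₁ c₂)
    (γ : ℝ) (hγ : 0 < γ) (hγL : γ ≤ c₁ / L)
    (β β' ξ q : EuclideanSpace ℝ (Fin p))
    (hq : ∀ x : EuclideanSpace ℝ (Fin p),
      g q + (1 / (2 * γ)) * (dNorm d (q - β)) ^ 2 ≤
        g x + (1 / (2 * γ)) * (dNorm d (x - β)) ^ 2) :
    -(2 * γ) * ((h q + g q) - (h β' + g β')) ≥
      (dNorm d (q - β')) ^ 2 +
        2 * dInner d (q - β') (ξ - γ • dInvMul d (h' ξ) - β) -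
        (dNorm d (β' - ξ)) ^ 2 := by
  have hd₀ (i : Fin p) : 0 < d i := hc₁.trans_le (hd i).1
  have hprox := IsScaledProx.mul_sub_le_dInner d hq hg (fun i ↦ (hd₀ i).le) hγ β'
  have hsmooth : h q - h β' ≤ ⟪h' ξ, q - β'⟫ + L / 2 * ‖q - ξ‖ ^ 2 := by
    have hdescent := le_add_inner_gradient_add_sq hdiff hlip ξ q
    have hgrad := hh.add_inner_gradient_le (hdiff ξ) β'
    rw [← sub_sub_sub_cancel_right q β' ξ, inner_sub_right]
    linarith
  have hnorm : γ * L * ‖q - ξ‖ ^ 2 ≤ dInner d (q - ξ) (q - ξ) :=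
    (mul_le_mul_of_nonneg_right ((le_div_iff₀ hL).1 hγL) (sq_nonneg _)).trans
      (mul_norm_sq_le_dInner_self d (fun i ↦ (hd i).1) _)
  rw [ge_iff_le, dNorm_sq d (fun i ↦ (hd₀ i).le), dNorm_sq d (fun i ↦ (hd₀ i).le),
    dInner_three_point d (fun i ↦ (hd₀ i).ne') γ β β' ξ q (h' ξ)]
  linarith [mul_le_mul_of_nonneg_left hsmooth hγ.le]

/-- For `h` convex differentiable with L-Lipschitz gradient, `g` convex,
`F = h + g`, `D` diagonal with entries in `[c₁, c₂]`, `γ ∈ (0, c₁/L]`, and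
`q = Prox_{γ,g}^D(β)`, for all `β', ξ`:
`−2γ(F(q) − F(β')) ≥ ‖q − β'‖_D² + 2⟨q − β', ξ − γ D⁻¹∇h(ξ) − β⟩_D − ‖β' − ξ‖_D²`. -/
theorem stmt_4 {p : ℕ} (hp : 1 ≤ p)
    (h g : EuclideanSpace ℝ (Fin p) → ℝ)
    (h' : EuclideanSpace ℝ (Fin p) → EuclideanSpace ℝ (Fin p))
    (hh : ConvexOn ℝ Set.univ h)
    (hdiff : ∀ x, HasGradientAt h (h' x) x)
    (L : ℝ) (hL : 0 < L)
    (hlip : ∀ x y : EuclideanSpace ℝ (Fin p), ‖h' x - h' y‖ ≤ L * ‖x - y‖)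
    (hg : ConvexOn ℝ Set.univ g)
    (c₁ c₂ : ℝ) (hc₁ : 0 < c₁) (hc₁₂ : c₁ ≤ c₂)
    (d : Fin p → ℝ) (hd : ∀ i, d i ∈ Set.Icc c₁ c₂)
    (γ : ℝ) (hγ : 0 < γ) (hγL : γ ≤ c₁ / L)
    (β β' ξ q : EuclideanSpace ℝ (Fin p))
    (hq : ∀ x : EuclideanSpace ℝ (Fin p),
      g q + (1 / (2 * γ)) * (dNorm d (q - β)) ^ 2 ≤
        g x + (1 / (2 * γ)) * (dNorm d (x - β)) ^ 2) :
    -(2 * γ) * ((h q + g q) - (h β' + g β')) ≥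
      (dNorm d (q - β')) ^ 2 +
        2 * dInner d (q - β') (ξ - γ • dInvMul d (h' ξ) - β) -
        (dNorm d (β' - ξ)) ^ 2 :=
  stmt_4_general h g h' hh hdiff L hL hlip hg c₁ c₂ hc₁ d hd γ hγ hγL β β' ξ q hq
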